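/- arXiv:2604.21020 — 2 statements merged into one kernel-verified Lean document; each statement's English description precedes it below -/
import Mathlib

section
/- Let Y ∈ ℝⁿ, let B be a real n×L matrix with spectral norm ‖B‖₂ ≤ B*, and let C(φ), C(φ') be real symmetric n×n matrices, each with eigenvalues bounded below by λ_min > 0, satisfying ‖C(φ) − C(φ')‖₂ ≤ L_φ ‖φ − φ'‖₂ for parameters φ, φ' ∈ ℝˡ. Define the quadratic form Q(β, φ) = (Y − Bβ)ᵀ C(φ)⁻¹ (Y − Bβ) for β ∈ ℝᴸ. Then for all β, β' ∈ ℝᴸ: |Q(β, φ) − Q(β', φ')| ≤ [ (L_φ / λ_min²) · ( ‖Y‖₂² + 2 B* ‖Y‖₂ ‖β‖₂ + (B* ‖β‖₂)² ) ] · ‖φ − φ'‖₂ + [ (B* / λ_min) · ( 2‖Y‖₂ + B*(‖β‖₂ + ‖β'‖₂) ) ] · ‖β − β'‖₂. -/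
open Matrix

/-- The Euclidean norm `‖x‖₂ = √(Σᵢ xᵢ²)` of a vector `x ∈ ℝⁿ`. -/
noncomputable def vnorm {n : ℕ} (x : Fin n → ℝ) : ℝ :=
  Real.sqrt (∑ i, (x i) ^ 2)

/-- The spectral (operator ℓ²) norm of a real `m × n` matrix: the operator norm
of the induced linear map between Euclidean spaces. -/
noncomputable def specNorm {m n : ℕ} (A : Matrix (Fin m) (Fin n) ℝ) : ℝ :=
  ‖LinearMap.toContinuousLinearMap (Matrix.toEuclideanLin A)‖

/-- The quadratic form `Q(β, φ) = (Y − Bβ)ᵀ C(φ)⁻¹ (Y − Bβ)`. -/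
noncomputable def quadForm {n L l : ℕ} (Y : Fin n → ℝ)
    (B : Matrix (Fin n) (Fin L) ℝ) (Cm : (Fin l → ℝ) → Matrix (Fin n) (Fin n) ℝ)
    (β : Fin L → ℝ) (φ : Fin l → ℝ) : ℝ :=
  (Y - B.mulVec β) ⬝ᵥ (Cm φ)⁻¹.mulVec (Y - B.mulVec β)

/-!
With `r = Y - Bβ` and `r' = Y - Bβ'`,
`Q(β,φ) - Q(β',φ') = rᵀ(C⁻¹ - C'⁻¹)r + (r - r')ᵀC'⁻¹r + r'ᵀC'⁻¹(r - r')`.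
The bound `λ_min ‖x‖² ≤ xᵀCx ≤ ‖x‖ ‖Cx‖` gives `‖C⁻¹‖ ≤ 1/λ_min`, so the resolvent identity
`C⁻¹ - C'⁻¹ = C⁻¹(C' - C)C'⁻¹` bounds the first term by `L_φ ‖φ - φ'‖ ‖r‖² / λ_min²`, and the other
two are at most `‖r - r'‖ (‖r‖ + ‖r'‖) / λ_min` with `‖r - r'‖ ≤ B* ‖β - β'‖`.
-/

open WithLp
open scoped Matrix.Norms.L2Operator

namespace Matrix

variable {m n : Type*}

lemma posDef_of_posSemidef_sub_smul_one [DecidableEq n] {C : Matrix n n ℝ} {l : ℝ} (hl : 0 < l)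
    (hC : (C - l • 1).PosSemidef) : C.PosDef := by
  simpa using PosDef.posSemidef_add hC (PosDef.one.smul hl)

variable [Fintype m] [Fintype n]

lemma abs_dotProduct_le (x y : n → ℝ) : |x ⬝ᵥ y| ≤ ‖toLp 2 x‖ * ‖toLp 2 y‖ := by
  simpa [EuclideanSpace.inner_toLp_toLp, dotProduct_comm] using
    abs_real_inner_le_norm (toLp 2 x) (toLp 2 y)

variable [DecidableEq n]

lemma norm_toLp_mulVec_le (A : Matrix m n ℝ) (x : n → ℝ) :
    ‖toLp 2 (A *ᵥ x)‖ ≤ ‖A‖ * ‖toLp 2 x‖ :=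
  A.l2_opNorm_mulVec (toLp 2 x)

lemma l2_opNorm_le_of_norm_toLp_mulVec_le {A : Matrix m n ℝ} {c : ℝ} (hc : 0 ≤ c)
    (h : ∀ x, ‖toLp 2 (A *ᵥ x)‖ ≤ c * ‖toLp 2 x‖) : ‖A‖ ≤ c :=
  ContinuousLinearMap.opNorm_le_bound _ hc fun x => h x.ofLp

lemma abs_dotProduct_mulVec_le (A : Matrix m n ℝ) (x : m → ℝ) (y : n → ℝ) :
    |x ⬝ᵥ A *ᵥ y| ≤ ‖A‖ * ‖toLp 2 x‖ * ‖toLp 2 y‖ :=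
  calc |x ⬝ᵥ A *ᵥ y| ≤ ‖toLp 2 x‖ * ‖toLp 2 (A *ᵥ y)‖ := abs_dotProduct_le x _
    _ ≤ ‖toLp 2 x‖ * (‖A‖ * ‖toLp 2 y‖) := by gcongr; exact norm_toLp_mulVec_le A y
    _ = ‖A‖ * ‖toLp 2 x‖ * ‖toLp 2 y‖ := by ring

lemma norm_toLp_mulVec_sub_mulVec_le (A : Matrix m n ℝ) (x x' : n → ℝ) :
    ‖toLp 2 (A *ᵥ x - A *ᵥ x')‖ ≤ ‖A‖ * ‖toLp 2 (x - x')‖ := by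
  rw [← mulVec_sub]
  exact norm_toLp_mulVec_le A _

lemma norm_toLp_sub_mulVec_le (y : m → ℝ) (A : Matrix m n ℝ) (x : n → ℝ) :
    ‖toLp 2 (y - A *ᵥ x)‖ ≤ ‖toLp 2 y‖ + ‖A‖ * ‖toLp 2 x‖ :=
  calc ‖toLp 2 (y - A *ᵥ x)‖ ≤ ‖toLp 2 y‖ + ‖toLp 2 (A *ᵥ x)‖ := by
        rw [toLp_sub]; exact norm_sub_le _ _
    _ ≤ ‖toLp 2 y‖ + ‖A‖ * ‖toLp 2 x‖ := by gcongr; exact norm_toLp_mulVec_le A x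

lemma abs_dotProduct_mulVec_sub_le (M M' : Matrix n n ℝ) (r r' : n → ℝ) :
    |r ⬝ᵥ M *ᵥ r - r' ⬝ᵥ M' *ᵥ r'| ≤
      ‖M - M'‖ * ‖toLp 2 r‖ ^ 2 + ‖M'‖ * (‖toLp 2 r‖ + ‖toLp 2 r'‖) * ‖toLp 2 (r - r')‖ := by
  have hsplit : r ⬝ᵥ M *ᵥ r - r' ⬝ᵥ M' *ᵥ r' =
      r ⬝ᵥ (M - M') *ᵥ r + ((r - r') ⬝ᵥ M' *ᵥ r + r' ⬝ᵥ M' *ᵥ (r - r')) := by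
    simp only [sub_mulVec, mulVec_sub, dotProduct_sub, sub_dotProduct]
    ring
  rw [hsplit]
  calc _ ≤ |r ⬝ᵥ (M - M') *ᵥ r| + (|(r - r') ⬝ᵥ M' *ᵥ r| + |r' ⬝ᵥ M' *ᵥ (r - r')|) :=
        (abs_add_le _ _).trans (add_le_add le_rfl (abs_add_le _ _))
    _ ≤ ‖M - M'‖ * ‖toLp 2 r‖ * ‖toLp 2 r‖ +
          (‖M'‖ * ‖toLp 2 (r - r')‖ * ‖toLp 2 r‖ + ‖M'‖ * ‖toLp 2 r'‖ * ‖toLp 2 (r - r')‖) := by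
        gcongr <;> exact abs_dotProduct_mulVec_le _ _ _
    _ = _ := by ring

lemma l2_opNorm_inv_sub_inv_le {𝕜 : Type*} [RCLike 𝕜] {C D : Matrix n n 𝕜}
    (h : IsUnit C ↔ IsUnit D) : ‖C⁻¹ - D⁻¹‖ ≤ ‖C⁻¹‖ * ‖D - C‖ * ‖D⁻¹‖ := by
  rw [inv_sub_inv h]
  exact (l2_opNorm_mul _ _).trans (mul_le_mul_of_nonneg_right (l2_opNorm_mul _ _) (norm_nonneg _))

section

variable {C : Matrix n n ℝ} {l : ℝ}

lemma mul_norm_toLp_le_norm_toLp_mulVec_of_posSemidef_sub_smul_one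
    (hC : (C - l • 1).PosSemidef) (x : n → ℝ) : l * ‖toLp 2 x‖ ≤ ‖toLp 2 (C *ᵥ x)‖ := by
  have hquad : l * ‖toLp 2 x‖ ^ 2 ≤ x ⬝ᵥ C *ᵥ x := by
    have h := hC.dotProduct_mulVec_nonneg x
    rw [← real_inner_self_eq_norm_sq, EuclideanSpace.inner_toLp_toLp]
    simp only [star_trivial, sub_mulVec, dotProduct_sub, smul_mulVec, one_mulVec,
      dotProduct_smul, smul_eq_mul] at h ⊢
    linarith
  have hcs : x ⬝ᵥ C *ᵥ x ≤ ‖toLp 2 x‖ * ‖toLp 2 (C *ᵥ x)‖ :=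
    (le_abs_self _).trans (abs_dotProduct_le _ _)
  rcases (norm_nonneg (toLp 2 x)).eq_or_lt with hx | hx
  · rw [← hx, mul_zero]; exact norm_nonneg _
  · nlinarith

lemma l2_opNorm_inv_le_of_posSemidef_sub_smul_one (hl : 0 < l) (hC : (C - l • 1).PosSemidef) :
    ‖C⁻¹‖ ≤ l⁻¹ := by
  have hdet := (isUnit_iff_isUnit_det C).1 (posDef_of_posSemidef_sub_smul_one hl hC).isUnit
  refine l2_opNorm_le_of_norm_toLp_mulVec_le (inv_nonneg.2 hl.le) fun y => ?_
  have h := mul_norm_toLp_le_norm_toLp_mulVec_of_posSemidef_sub_smul_one hC (C⁻¹ *ᵥ y)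
  rw [mulVec_mulVec, mul_nonsing_inv _ hdet, one_mulVec] at h
  rwa [inv_mul_eq_div, le_div_iff₀' hl]

lemma l2_opNorm_inv_sub_inv_le_of_posSemidef_sub_smul_one {D : Matrix n n ℝ} (hl : 0 < l)
    (hC : (C - l • 1).PosSemidef) (hD : (D - l • 1).PosSemidef) :
    ‖C⁻¹ - D⁻¹‖ ≤ ‖C - D‖ / l ^ 2 :=
  calc ‖C⁻¹ - D⁻¹‖ ≤ ‖C⁻¹‖ * ‖D - C‖ * ‖D⁻¹‖ :=
        l2_opNorm_inv_sub_inv_le <| iff_of_true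
          (posDef_of_posSemidef_sub_smul_one hl hC).isUnit
          (posDef_of_posSemidef_sub_smul_one hl hD).isUnit
    _ ≤ l⁻¹ * ‖C - D‖ * l⁻¹ := by
        rw [norm_sub_rev]
        gcongr
        exacts [l2_opNorm_inv_le_of_posSemidef_sub_smul_one hl hC,
          l2_opNorm_inv_le_of_posSemidef_sub_smul_one hl hD]
    _ = ‖C - D‖ / l ^ 2 := by field_simp

end

end Matrix

lemma vnorm_eq_norm {n : ℕ} (x : Fin n → ℝ) : vnorm x = ‖toLp 2 x‖ := by
  simp [vnorm, EuclideanSpace.norm_eq, sq_abs]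

lemma specNorm_eq_l2_opNorm {m n : ℕ} (A : Matrix (Fin m) (Fin n) ℝ) : specNorm A = ‖A‖ := rfl

theorem quadForm_lipschitz_general {n L l : ℕ} (Y : Fin n → ℝ)
    (B : Matrix (Fin n) (Fin L) ℝ) (Bstar : ℝ) (hB : specNorm B ≤ Bstar)
    (Cm : (Fin l → ℝ) → Matrix (Fin n) (Fin n) ℝ)
    (lmin Lphi : ℝ) (hl : 0 < lmin) (φ φ' : Fin l → ℝ)
    (hpsd : (Cm φ - lmin • (1 : Matrix (Fin n) (Fin n) ℝ)).PosSemidef)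
    (hpsd' : (Cm φ' - lmin • (1 : Matrix (Fin n) (Fin n) ℝ)).PosSemidef)
    (hLip : specNorm (Cm φ - Cm φ') ≤ Lphi * vnorm (φ - φ'))
    (β β' : Fin L → ℝ) :
    |quadForm Y B Cm β φ - quadForm Y B Cm β' φ'| ≤
      (Lphi / lmin ^ 2) *
          (vnorm Y ^ 2 + 2 * Bstar * vnorm Y * vnorm β + (Bstar * vnorm β) ^ 2) *
          vnorm (φ - φ') +
        (Bstar / lmin) * (2 * vnorm Y + Bstar * (vnorm β + vnorm β')) *
          vnorm (β - β') := by
  simp only [vnorm_eq_norm] at hLip ⊢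
  rw [specNorm_eq_l2_opNorm] at hB hLip
  have hB0 : 0 ≤ Bstar := (norm_nonneg _).trans hB
  have hinv : ‖(Cm φ)⁻¹ - (Cm φ')⁻¹‖ ≤ Lphi * ‖toLp 2 (φ - φ')‖ / lmin ^ 2 :=
    (l2_opNorm_inv_sub_inv_le_of_posSemidef_sub_smul_one hl hpsd hpsd').trans (by gcongr)
  have hres : ‖toLp 2 (Y - B *ᵥ β)‖ ≤ ‖toLp 2 Y‖ + Bstar * ‖toLp 2 β‖ :=
    (norm_toLp_sub_mulVec_le Y B β).trans (by gcongr)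
  have hres' : ‖toLp 2 (Y - B *ᵥ β')‖ ≤ ‖toLp 2 Y‖ + Bstar * ‖toLp 2 β'‖ :=
    (norm_toLp_sub_mulVec_le Y B β').trans (by gcongr)
  have hres_sub : ‖toLp 2 ((Y - B *ᵥ β) - (Y - B *ᵥ β'))‖ ≤ Bstar * ‖toLp 2 (β - β')‖ := by
    rw [sub_sub_sub_cancel_left, toLp_sub, norm_sub_rev, ← toLp_sub]
    exact (norm_toLp_mulVec_sub_mulVec_le B β β').trans (by gcongr)
  calc _ ≤ _ := abs_dotProduct_mulVec_sub_le _ _ _ _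
    _ ≤ Lphi * ‖toLp 2 (φ - φ')‖ / lmin ^ 2 * (‖toLp 2 Y‖ + Bstar * ‖toLp 2 β‖) ^ 2 +
          lmin⁻¹ * ((‖toLp 2 Y‖ + Bstar * ‖toLp 2 β‖) + (‖toLp 2 Y‖ + Bstar * ‖toLp 2 β'‖)) *
            (Bstar * ‖toLp 2 (β - β')‖) := by
        gcongr
        exacts [(norm_nonneg _).trans hinv, l2_opNorm_inv_le_of_posSemidef_sub_smul_one hl hpsd']
    _ = _ := by field_simp; ring

/-- **Composite Lipschitz bound for the quadratic term** of the Gaussian-process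
log-likelihood:
`|Q(β,φ) − Q(β',φ')| ≤ (L_φ/λ_min²)(‖Y‖² + 2B*‖Y‖‖β‖ + (B*‖β‖)²)‖φ − φ'‖
  + (B*/λ_min)(2‖Y‖ + B*(‖β‖ + ‖β'‖))‖β − β'‖`. -/
theorem quadForm_lipschitz {n L l : ℕ} (Y : Fin n → ℝ)
    (B : Matrix (Fin n) (Fin L) ℝ) (Bstar : ℝ) (hB : specNorm B ≤ Bstar)
    (Cm : (Fin l → ℝ) → Matrix (Fin n) (Fin n) ℝ)
    (lmin Lphi : ℝ) (hl : 0 < lmin) (φ φ' : Fin l → ℝ)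
    (hsymm : (Cm φ).IsSymm) (hsymm' : (Cm φ').IsSymm)
    (hpsd : (Cm φ - lmin • (1 : Matrix (Fin n) (Fin n) ℝ)).PosSemidef)
    (hpsd' : (Cm φ' - lmin • (1 : Matrix (Fin n) (Fin n) ℝ)).PosSemidef)
    (hLip : specNorm (Cm φ - Cm φ') ≤ Lphi * vnorm (φ - φ'))
    (β β' : Fin L → ℝ) :
    |quadForm Y B Cm β φ - quadForm Y B Cm β' φ'| ≤
      (Lphi / lmin ^ 2) *
          (vnorm Y ^ 2 + 2 * Bstar * vnorm Y * vnorm β + (Bstar * vnorm β) ^ 2) *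
          vnorm (φ - φ') +
        (Bstar / lmin) * (2 * vnorm Y + Bstar * (vnorm β + vnorm β')) *
          vnorm (β - β') :=
  quadForm_lipschitz_general Y B Bstar hB Cm lmin Lphi hl φ φ' hpsd hpsd' hLip β β'
end

section
/- Let Y ∈ ℝⁿ, let B be a real n×L matrix with ‖B‖₂ ≤ B*, let R > 0, and let C(φ), C(φ') be real symmetric n×n matrices, each with eigenvalues bounded below by λ_min > 0, satisfying ‖C(φ) − C(φ')‖₂ ≤ L_φ ‖φ − φ'‖₂ for parameters φ, φ' ∈ ℝˡ. Define Q(β, φ) = (Y − Bβ)ᵀ C(φ)⁻¹ (Y − Bβ). Then for all β, β' ∈ ℝᴸ with ‖β‖₂ ≤ R and ‖β'‖₂ ≤ R: |Q(β, φ) − Q(β', φ')| ≤ 𝓛(Y) · ‖(β, φ) − (β', φ')‖₂, where 𝓛(Y) = √2 · max{ (L_φ / λ_min²) · ( ‖Y‖₂² + 2 B* R ‖Y‖₂ + (B* R)² ), (B* / λ_min) · ( 2‖Y‖₂ + 2 B* R ) } and ‖(β, φ) − (β', φ')‖₂ = √(‖β − β'‖₂² + ‖φ − φ'‖₂²). 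-/
open Matrix

/-- The stochastic Lipschitz coefficient `𝓛(Y)` on the parameter ball of radius `R`:
`𝓛(Y) = √2 · max{ (L_φ/λ_min²)(‖Y‖² + 2B*R‖Y‖ + (B*R)²), (B*/λ_min)(2‖Y‖ + 2B*R) }`. -/
noncomputable def stochLipCoeff {n : ℕ} (Y : Fin n → ℝ)
    (Bstar R lmin Lphi : ℝ) : ℝ :=
  Real.sqrt 2 *
    max ((Lphi / lmin ^ 2) * (vnorm Y ^ 2 + 2 * Bstar * R * vnorm Y + (Bstar * R) ^ 2))
      ((Bstar / lmin) * (2 * vnorm Y + 2 * Bstar * R))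

/-! With residuals `r = Y − Bβ`, `r' = Y − Bβ'`, split
`Q(β,φ) − Q(β',φ') = r⬝(C⁻¹ − C'⁻¹)r + (r⬝C'⁻¹r − r'⬝C'⁻¹r')`.
The lower eigenvalue bound gives `‖C⁻¹‖ ≤ 1/λ_min`, so by the resolvent identity
`C⁻¹ − C'⁻¹ = C⁻¹(C' − C)C'⁻¹` the first term is at most `L_φ‖φ − φ'‖‖r‖²/λ_min²`, and writing
`r⬝Ar − r'⬝Ar' = (r − r')⬝Ar + r'⬝A(r − r')` the second is at most `‖r − r'‖(‖r‖ + ‖r'‖)/λ_min`.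
On the ball `‖r‖, ‖r'‖ ≤ ‖Y‖ + B*R` and `‖r − r'‖ ≤ B*‖β − β'‖`; finally
`a u + b v ≤ max(a, b) (u + v) ≤ √2 max(a, b) √(u² + v²)`. -/

namespace QuadFormLipschitz

variable {m n : ℕ}

lemma vnorm_eq_norm_toLp (x : Fin n → ℝ) : vnorm x = ‖WithLp.toLp 2 x‖ := by
  simp [vnorm, EuclideanSpace.norm_eq, Real.norm_eq_abs, sq_abs]

lemma vnorm_nonneg (x : Fin n → ℝ) : 0 ≤ vnorm x := Real.sqrt_nonneg _

lemma vnorm_sq (x : Fin n → ℝ) : vnorm x ^ 2 = x ⬝ᵥ x := by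
  rw [vnorm, Real.sq_sqrt (Finset.sum_nonneg fun i _ => sq_nonneg _)]
  simp [dotProduct, sq]

lemma vnorm_sub_le (x y : Fin n → ℝ) : vnorm (x - y) ≤ vnorm x + vnorm y := by
  simpa only [vnorm_eq_norm_toLp, WithLp.toLp_sub] using norm_sub_le (WithLp.toLp 2 x) _

lemma vnorm_sub_comm (x y : Fin n → ℝ) : vnorm (x - y) = vnorm (y - x) := by
  simpa only [vnorm_eq_norm_toLp, WithLp.toLp_sub] using norm_sub_rev (WithLp.toLp 2 x) _

lemma abs_dotProduct_le (x y : Fin n → ℝ) : |x ⬝ᵥ y| ≤ vnorm x * vnorm y := by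
  have h : x ⬝ᵥ y = inner ℝ (WithLp.toLp 2 x) (WithLp.toLp 2 y) := by
    simp [dotProduct, PiLp.inner_apply, mul_comm]
  rw [h, vnorm_eq_norm_toLp, vnorm_eq_norm_toLp]
  exact abs_real_inner_le_norm _ _

lemma vnorm_mulVec_le (A : Matrix (Fin m) (Fin n) ℝ) (x : Fin n → ℝ) :
    vnorm (A *ᵥ x) ≤ specNorm A * vnorm x := by
  rw [vnorm_eq_norm_toLp, vnorm_eq_norm_toLp]
  exact (LinearMap.toContinuousLinearMap (toEuclideanLin A)).le_opNorm (WithLp.toLp 2 x)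

lemma specNorm_sub_comm (A A' : Matrix (Fin m) (Fin n) ℝ) :
    specNorm (A - A') = specNorm (A' - A) := by
  simp only [specNorm, map_sub, norm_sub_rev]

section LowerBound

variable {lmin : ℝ} {C : Matrix (Fin n) (Fin n) ℝ}

lemma mul_dotProduct_self_le (hC : (C - lmin • (1 : Matrix (Fin n) (Fin n) ℝ)).PosSemidef)
    (x : Fin n → ℝ) : lmin * (x ⬝ᵥ x) ≤ x ⬝ᵥ C *ᵥ x := by
  have h := hC.dotProduct_mulVec_nonneg x
  simp only [star_trivial, sub_mulVec, dotProduct_sub, smul_mulVec, one_mulVec,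
    dotProduct_smul, smul_eq_mul] at h
  linarith

lemma posDef_of_posSemidef_sub_smul_one (hl : 0 < lmin)
    (hC : (C - lmin • (1 : Matrix (Fin n) (Fin n) ℝ)).PosSemidef) : C.PosDef := by
  simpa using PosDef.posSemidef_add hC (PosDef.one.smul hl)

lemma vnorm_inv_mulVec_le (hl : 0 < lmin)
    (hC : (C - lmin • (1 : Matrix (Fin n) (Fin n) ℝ)).PosSemidef) (x : Fin n → ℝ) :
    vnorm (C⁻¹ *ᵥ x) ≤ lmin⁻¹ * vnorm x := by
  set y := C⁻¹ *ᵥ x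
  have hCy : C *ᵥ y = x := by
    rw [mulVec_mulVec, mul_nonsing_inv _
      ((C.isUnit_iff_isUnit_det).mp (posDef_of_posSemidef_sub_smul_one hl hC).isUnit), one_mulVec]
  -- `λ ‖y‖² ≤ y ⬝ C y = y ⬝ x ≤ ‖y‖ ‖x‖`
  have key : lmin * vnorm y ^ 2 ≤ vnorm y * vnorm x := by
    have := mul_dotProduct_self_le hC y
    rw [hCy, ← vnorm_sq] at this
    exact this.trans ((le_abs_self _).trans (abs_dotProduct_le y x))
  rw [inv_mul_eq_div, le_div_iff₀ hl]
  nlinarith [vnorm_nonneg y, vnorm_nonneg x]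

lemma abs_dotProduct_inv_mulVec_sub_le {C' : Matrix (Fin n) (Fin n) ℝ} (hl : 0 < lmin)
    (hC : (C - lmin • (1 : Matrix (Fin n) (Fin n) ℝ)).PosSemidef)
    (hC' : (C' - lmin • (1 : Matrix (Fin n) (Fin n) ℝ)).PosSemidef) (r : Fin n → ℝ) :
    |r ⬝ᵥ C⁻¹ *ᵥ r - r ⬝ᵥ C'⁻¹ *ᵥ r| ≤ lmin⁻¹ ^ 2 * specNorm (C - C') * vnorm r ^ 2 := by
  have hinv : C⁻¹ - C'⁻¹ = C⁻¹ * (C' - C) * C'⁻¹ := by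
    simp only [nonsing_inv_eq_ringInverse]
    exact Ring.inverse_sub_inverse (iff_of_true (posDef_of_posSemidef_sub_smul_one hl hC).isUnit
      (posDef_of_posSemidef_sub_smul_one hl hC').isUnit)
  have hdiff : r ⬝ᵥ C⁻¹ *ᵥ r - r ⬝ᵥ C'⁻¹ *ᵥ r = r ⬝ᵥ C⁻¹ *ᵥ ((C' - C) *ᵥ (C'⁻¹ *ᵥ r)) := by
    rw [← dotProduct_sub, ← sub_mulVec, hinv, mulVec_mulVec, mulVec_mulVec, Matrix.mul_assoc]
  have h₁ : vnorm (C'⁻¹ *ᵥ r) ≤ lmin⁻¹ * vnorm r := vnorm_inv_mulVec_le hl hC' r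
  have h₂ : vnorm ((C' - C) *ᵥ (C'⁻¹ *ᵥ r)) ≤ specNorm (C' - C) * (lmin⁻¹ * vnorm r) :=
    (vnorm_mulVec_le _ _).trans (by gcongr; exact norm_nonneg _)
  have h₃ : vnorm (C⁻¹ *ᵥ ((C' - C) *ᵥ (C'⁻¹ *ᵥ r))) ≤
      lmin⁻¹ * (specNorm (C' - C) * (lmin⁻¹ * vnorm r)) :=
    (vnorm_inv_mulVec_le hl hC _).trans (by gcongr)
  calc |r ⬝ᵥ C⁻¹ *ᵥ r - r ⬝ᵥ C'⁻¹ *ᵥ r|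
      ≤ vnorm r * vnorm (C⁻¹ *ᵥ ((C' - C) *ᵥ (C'⁻¹ *ᵥ r))) := hdiff ▸ abs_dotProduct_le _ _
    _ ≤ vnorm r * (lmin⁻¹ * (specNorm (C' - C) * (lmin⁻¹ * vnorm r))) := by
        gcongr; exact vnorm_nonneg _
    _ = lmin⁻¹ ^ 2 * specNorm (C - C') * vnorm r ^ 2 := by rw [specNorm_sub_comm]; ring

end LowerBound

lemma abs_dotProduct_mulVec_sub_le {A : Matrix (Fin n) (Fin n) ℝ} {K : ℝ}
    (hA : ∀ x, vnorm (A *ᵥ x) ≤ K * vnorm x) (r r' : Fin n → ℝ) :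
    |r ⬝ᵥ A *ᵥ r - r' ⬝ᵥ A *ᵥ r'| ≤ K * vnorm (r - r') * (vnorm r + vnorm r') := by
  have hsplit : r ⬝ᵥ A *ᵥ r - r' ⬝ᵥ A *ᵥ r' = (r - r') ⬝ᵥ A *ᵥ r + r' ⬝ᵥ A *ᵥ (r - r') := by
    simp only [mulVec_sub, sub_dotProduct, dotProduct_sub]
    ring
  calc |r ⬝ᵥ A *ᵥ r - r' ⬝ᵥ A *ᵥ r'|
      ≤ vnorm (r - r') * vnorm (A *ᵥ r) + vnorm r' * vnorm (A *ᵥ (r - r')) := by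
        rw [hsplit]
        exact (abs_add_le _ _).trans (add_le_add (abs_dotProduct_le _ _) (abs_dotProduct_le _ _))
    _ ≤ vnorm (r - r') * (K * vnorm r) + vnorm r' * (K * vnorm (r - r')) := by
        gcongr
        · exact vnorm_nonneg _
        · exact hA r
        · exact vnorm_nonneg _
        · exact hA _
    _ = K * vnorm (r - r') * (vnorm r + vnorm r') := by ring

lemma vnorm_sub_mulVec_le {Y : Fin m → ℝ} {B : Matrix (Fin m) (Fin n) ℝ} {Bstar R : ℝ}
    {β : Fin n → ℝ} (hB : specNorm B ≤ Bstar) (hβ : vnorm β ≤ R) :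
    vnorm (Y - B *ᵥ β) ≤ vnorm Y + Bstar * R := by
  have hBstar : 0 ≤ Bstar := (norm_nonneg _).trans hB
  have hBβ : vnorm (B *ᵥ β) ≤ Bstar * R :=
    (vnorm_mulVec_le B β).trans (mul_le_mul hB hβ (vnorm_nonneg β) hBstar)
  linarith [vnorm_sub_le Y (B *ᵥ β)]

lemma vnorm_sub_mulVec_sub_sub_mulVec_le (Y : Fin m → ℝ) (B : Matrix (Fin m) (Fin n) ℝ)
    (β β' : Fin n → ℝ) :
    vnorm ((Y - B *ᵥ β) - (Y - B *ᵥ β')) ≤ specNorm B * vnorm (β - β') := by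
  rw [sub_sub_sub_cancel_left, ← mulVec_sub, vnorm_sub_comm β]
  exact vnorm_mulVec_le B _

lemma abs_quadForm_sub_le {l L : ℕ} (Y : Fin n → ℝ) (B : Matrix (Fin n) (Fin L) ℝ)
    (Cm : (Fin l → ℝ) → Matrix (Fin n) (Fin n) ℝ) {lmin : ℝ} (hl : 0 < lmin) {φ φ' : Fin l → ℝ}
    (hC : (Cm φ - lmin • (1 : Matrix (Fin n) (Fin n) ℝ)).PosSemidef)
    (hC' : (Cm φ' - lmin • (1 : Matrix (Fin n) (Fin n) ℝ)).PosSemidef) (β β' : Fin L → ℝ) :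
    |quadForm Y B Cm β φ - quadForm Y B Cm β' φ'| ≤
      lmin⁻¹ ^ 2 * specNorm (Cm φ - Cm φ') * vnorm (Y - B *ᵥ β) ^ 2 +
        lmin⁻¹ * vnorm ((Y - B *ᵥ β) - (Y - B *ᵥ β')) *
          (vnorm (Y - B *ᵥ β) + vnorm (Y - B *ᵥ β')) :=
  (abs_sub_le _ ((Y - B *ᵥ β) ⬝ᵥ (Cm φ')⁻¹ *ᵥ (Y - B *ᵥ β)) _).trans <|
    add_le_add (abs_dotProduct_inv_mulVec_sub_le hl hC hC' _)
      (abs_dotProduct_mulVec_sub_le (vnorm_inv_mulVec_le hl hC') _ _)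

lemma mul_add_mul_le_sqrt_two_mul_max_mul {a b u v : ℝ} (hab : 0 ≤ max a b) (hu : 0 ≤ u)
    (hv : 0 ≤ v) : a * u + b * v ≤ √2 * max a b * √(u ^ 2 + v ^ 2) := by
  have huv : u + v ≤ √2 * √(u ^ 2 + v ^ 2) := by
    rw [← Real.sqrt_mul zero_le_two]
    exact Real.le_sqrt_of_sq_le add_sq_le
  calc a * u + b * v ≤ max a b * (u + v) := by
        rw [mul_add]; gcongr; exacts [le_max_left a b, le_max_right a b]
    _ ≤ max a b * (√2 * √(u ^ 2 + v ^ 2)) := by gcongr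
    _ = √2 * max a b * √(u ^ 2 + v ^ 2) := by ring

end QuadFormLipschitz

open QuadFormLipschitz in
theorem quadForm_stochastic_lipschitz_general {n L l : ℕ} (Y : Fin n → ℝ)
    (B : Matrix (Fin n) (Fin L) ℝ) (Bstar R : ℝ) (hB : specNorm B ≤ Bstar)
    (Cm : (Fin l → ℝ) → Matrix (Fin n) (Fin n) ℝ)
    (lmin Lphi : ℝ) (hl : 0 < lmin) (φ φ' : Fin l → ℝ)
    (hpsd : (Cm φ - lmin • (1 : Matrix (Fin n) (Fin n) ℝ)).PosSemidef)
    (hpsd' : (Cm φ' - lmin • (1 : Matrix (Fin n) (Fin n) ℝ)).PosSemidef)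
    (hLip : specNorm (Cm φ - Cm φ') ≤ Lphi * vnorm (φ - φ'))
    (β β' : Fin L → ℝ) (hβ : vnorm β ≤ R) (hβ' : vnorm β' ≤ R) :
    |quadForm Y B Cm β φ - quadForm Y B Cm β' φ'| ≤
      stochLipCoeff Y Bstar R lmin Lphi *
        Real.sqrt (vnorm (β - β') ^ 2 + vnorm (φ - φ') ^ 2) := by
  set S := vnorm Y + Bstar * R
  have hR : 0 ≤ R := (vnorm_nonneg β).trans hβ
  have hBstar : 0 ≤ Bstar := (norm_nonneg _).trans hB
  have hLφ : 0 ≤ Lphi * vnorm (φ - φ') := (norm_nonneg _).trans hLip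
  have := vnorm_nonneg Y; have := vnorm_nonneg (β - β')
  have := vnorm_nonneg (Y - B *ᵥ β); have := vnorm_nonneg (Y - B *ᵥ β')
  have hr : vnorm (Y - B *ᵥ β) ≤ S := vnorm_sub_mulVec_le hB hβ
  have hr' : vnorm (Y - B *ᵥ β') ≤ S := vnorm_sub_mulVec_le hB hβ'
  have hrr' := vnorm_sub_mulVec_sub_sub_mulVec_le Y B β β'
  have hb : 0 ≤ Bstar / lmin * (2 * vnorm Y + 2 * Bstar * R) := by positivity
  calc |quadForm Y B Cm β φ - quadForm Y B Cm β' φ'|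
      ≤ _ := abs_quadForm_sub_le Y B Cm hl hpsd hpsd' β β'
    _ ≤ lmin⁻¹ ^ 2 * (Lphi * vnorm (φ - φ')) * S ^ 2
        + lmin⁻¹ * (Bstar * vnorm (β - β')) * (S + S) := by gcongr; exact hrr'.trans (by gcongr)
    _ = Lphi / lmin ^ 2 * (vnorm Y ^ 2 + 2 * Bstar * R * vnorm Y + (Bstar * R) ^ 2)
          * vnorm (φ - φ') + Bstar / lmin * (2 * vnorm Y + 2 * Bstar * R) * vnorm (β - β') := by
        ring
    _ ≤ _ := mul_add_mul_le_sqrt_two_mul_max_mul (hb.trans (le_max_right _ _))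
        (vnorm_nonneg _) (vnorm_nonneg _)
    _ = _ := by rw [stochLipCoeff, add_comm (vnorm (φ - φ') ^ 2)]

/-- **Stochastic Lipschitz bound for the quadratic term** on the compact parameter
ball of radius `R`: for `‖β‖₂ ≤ R`, `‖β'‖₂ ≤ R`,
`|Q(β,φ) − Q(β',φ')| ≤ 𝓛(Y) · √(‖β − β'‖₂² + ‖φ − φ'‖₂²)`. -/
theorem quadForm_stochastic_lipschitz {n L l : ℕ} (Y : Fin n → ℝ)
    (B : Matrix (Fin n) (Fin L) ℝ) (Bstar R : ℝ) (hB : specNorm B ≤ Bstar)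
    (hR : 0 < R)
    (Cm : (Fin l → ℝ) → Matrix (Fin n) (Fin n) ℝ)
    (lmin Lphi : ℝ) (hl : 0 < lmin) (φ φ' : Fin l → ℝ)
    (hsymm : (Cm φ).IsSymm) (hsymm' : (Cm φ').IsSymm)
    (hpsd : (Cm φ - lmin • (1 : Matrix (Fin n) (Fin n) ℝ)).PosSemidef)
    (hpsd' : (Cm φ' - lmin • (1 : Matrix (Fin n) (Fin n) ℝ)).PosSemidef)
    (hLip : specNorm (Cm φ - Cm φ') ≤ Lphi * vnorm (φ - φ'))
    (β β' : Fin L → ℝ) (hβ : vnorm β ≤ R) (hβ' : vnorm β' ≤ R) :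
    |quadForm Y B Cm β φ - quadForm Y B Cm β' φ'| ≤
      stochLipCoeff Y Bstar R lmin Lphi *
        Real.sqrt (vnorm (β - β') ^ 2 + vnorm (φ - φ') ^ 2) :=
  quadForm_stochastic_lipschitz_general Y B Bstar R hB Cm lmin Lphi hl φ φ' hpsd hpsd' hLip β β' hβ
    hβ'
end
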